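/- Let p ≥ 5, α > 0, ω > 0 and let N ≥ 2 be an integer. Let A be the set of continuously differentiable functions v : [0,∞) → ℂ such that ∫₀^∞|v|²dx, ∫₀^∞|v'|²dx and ∫₀^∞|v|^{p+1}dx are all finite, and for v ∈ A define S_ω(v) = N·((1/2)∫₀^∞|v'|²dx + (ω/2)∫₀^∞|v|²dx − (1/(p+1))∫₀^∞|v|^{p+1}dx) + (α/2)|v(0)|², I_ω(v) = N·(∫₀^∞|v'|²dx + ω∫₀^∞|v|²dx − ∫₀^∞|v|^{p+1}dx) + α|v(0)|², and P(v) = N·(∫₀^∞|v'|²dx − ((p−1)/(2(p+1)))∫₀^∞|v|^{p+1}dx) + (α/2)|v(0)|². Set d = inf { S_ω(v) : v ∈ A, v is not identically zero, I_ω(v) = 0 }. Then for every v ∈ A that is not identically zero and satisfies P(v) ≤ 0, one has d ≤ S_ω(v) − (1/2)·P(v). -/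

import Mathlib

open MeasureTheory Real Set Filter Topology

/-- Membership in the admissible class `A`: continuously differentiable on `[0,∞)` with
`|v|²`, `|v'|²` and `|v|^{p+1}` integrable on `(0,∞)`. -/
def MemA (p : ℝ) (v : ℝ → ℂ) : Prop :=
  ContDiffOn ℝ 1 v (Set.Ici 0) ∧
  MeasureTheory.IntegrableOn (fun x => ‖v x‖ ^ 2) (Set.Ioi 0) ∧
  MeasureTheory.IntegrableOn (fun x => ‖deriv v x‖ ^ 2) (Set.Ioi 0) ∧
  MeasureTheory.IntegrableOn (fun x => ‖v x‖ ^ (p + 1)) (Set.Ioi 0)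

/-- The action functional `S_ω`. -/
noncomputable def Sfun (p α ω : ℝ) (N : ℕ) (v : ℝ → ℂ) : ℝ :=
  (N : ℝ) * ((1 / 2) * (∫ x in Set.Ioi (0 : ℝ), ‖deriv v x‖ ^ 2)
      + (ω / 2) * (∫ x in Set.Ioi (0 : ℝ), ‖v x‖ ^ 2)
      - (1 / (p + 1)) * (∫ x in Set.Ioi (0 : ℝ), ‖v x‖ ^ (p + 1)))
    + (α / 2) * ‖v 0‖ ^ 2

/-- The Nehari functional `I_ω`. -/
noncomputable def Ifun (p α ω : ℝ) (N : ℕ) (v : ℝ → ℂ) : ℝ :=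
  (N : ℝ) * ((∫ x in Set.Ioi (0 : ℝ), ‖deriv v x‖ ^ 2)
      + ω * (∫ x in Set.Ioi (0 : ℝ), ‖v x‖ ^ 2)
      - (∫ x in Set.Ioi (0 : ℝ), ‖v x‖ ^ (p + 1)))
    + α * ‖v 0‖ ^ 2

/-- The virial functional `P`. -/
noncomputable def Pfun (p α : ℝ) (N : ℕ) (v : ℝ → ℂ) : ℝ :=
  (N : ℝ) * ((∫ x in Set.Ioi (0 : ℝ), ‖deriv v x‖ ^ 2)
      - (p - 1) / (2 * (p + 1)) * (∫ x in Set.Ioi (0 : ℝ), ‖v x‖ ^ (p + 1)))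
    + (α / 2) * ‖v 0‖ ^ 2


/-!
The dilation `v_t x = √t v (t x)` preserves `∫|v|²` and multiplies `∫|v'|²`, `∫|v|^{p+1}` and
`|v 0|²` by `t²`, `t^{(p-1)/2}` and `t`. Since `P(v) ≤ 0` forces `∫|v'|² < ∫|v|^{p+1}`, the map
`t ↦ I_ω(v_t)` is positive at `0` and negative for large `t`, so some `v_t` lies on the Nehari
manifold and `d ≤ S_ω(v_t)`. Finally `S_ω(v_t) ≤ S_ω(v) - (1 - t²) P(v) / 2 ≤ S_ω(v) - P(v) / 2`:
the defect in the first inequality is `α |v 0|² (1 - t)² / 4` plus a multiple of the Bernoulli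
remainder `t^{(p-1)/2} - 1 - (p - 1)(t² - 1) / 4`, which is nonnegative because `p ≥ 5`.
-/

lemma setIntegral_Ioi_pos_of_continuousWithinAt {f : ℝ → ℝ} {a x₀ : ℝ}
    (hnn : ∀ x ∈ Ioi a, 0 ≤ f x) (hint : IntegrableOn f (Ioi a)) (hx₀ : a ≤ x₀)
    (hf : ContinuousWithinAt f (Ioi x₀) x₀) (hfx₀ : 0 < f x₀) :
    0 < ∫ x in Ioi a, f x := by
  obtain ⟨u, hu, hpos⟩ := mem_nhdsGT_iff_exists_Ioo_subset.mp (hf.eventually (lt_mem_nhds hfx₀))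
  rw [setIntegral_pos_iff_support_of_nonneg_ae (ae_restrict_of_forall_mem measurableSet_Ioi hnn)
    hint]
  calc 0 < volume (Ioo x₀ u) := by simpa using hu
    _ ≤ volume (Function.support f ∩ Ioi a) :=
      measure_mono fun x hx => ⟨(show 0 < f x from hpos hx).ne', hx₀.trans_lt hx.1⟩

lemma one_add_mul_sq_sub_one_le_rpow {t q : ℝ} (ht : 0 ≤ t) (hq : 2 ≤ q) :
    1 + q / 2 * (t ^ 2 - 1) ≤ t ^ q := by
  have h := one_add_mul_self_le_rpow_one_add (s := t ^ 2 - 1) (by nlinarith)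
    (by linarith : 1 ≤ q / 2)
  have hpow : (t ^ 2) ^ (q / 2) = t ^ q := by
    rw [← Real.rpow_natCast_mul ht]; congr 1; push_cast; ring
  rwa [add_sub_cancel, hpow] at h

lemma exists_pos_sq_mul_add_add_mul_eq_rpow_mul {a b c r q : ℝ} (ha : 0 ≤ a) (hb : 0 < b)
    (hc : 0 ≤ c) (har : a < r) (hq : 2 ≤ q) :
    ∃ t > 0, t ^ 2 * a + b + t * c = t ^ q * r := by
  set g : ℝ → ℝ := fun t => t ^ 2 * a + b + t * c - t ^ q * r
  set L := 1 + (b + c) / (r - a)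
  have hL : L * (r - a) = r - a + (b + c) := by
    simp only [L]; field_simp [(sub_pos.mpr har).ne']
  have hL1 : 1 ≤ L := le_add_of_nonneg_right (by have := sub_pos.mpr har; positivity)
  have hg0 : g 0 = b := by simp [g, Real.zero_rpow (by linarith : q ≠ 0)]
  have hgL : g L < 0 := by
    have hpow : L ^ 2 ≤ L ^ q := by
      simpa using Real.rpow_le_rpow_of_exponent_le hL1 hq
    have : L ^ 2 * r ≤ L ^ q * r := mul_le_mul_of_nonneg_right hpow (by linarith)
    simp only [g]
    nlinarith
  have hcont : ContinuousOn g (Icc 0 L) :=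
    ((by fun_prop : Continuous fun t : ℝ => t ^ 2 * a + b + t * c).sub
      ((Real.continuous_rpow_const (by linarith)).mul continuous_const)).continuousOn
  obtain ⟨t, ht, hgt⟩ := intermediate_value_Icc' (by linarith) hcont ⟨hgL.le, hg0 ▸ hb.le⟩
  have ht0 : t ≠ 0 := by rintro rfl; linarith
  exact ⟨t, lt_of_le_of_ne ht.1 (Ne.symm ht0), sub_eq_zero.mp hgt⟩

noncomputable def dilate (t : ℝ) (v : ℝ → ℂ) : ℝ → ℂ := fun x => (Real.sqrt t : ℂ) * v (t * x)

section Dilation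

variable {t : ℝ} {v : ℝ → ℂ}

lemma norm_dilate (x : ℝ) : ‖dilate t v x‖ = Real.sqrt t * ‖v (t * x)‖ := by
  rw [dilate, norm_mul, Complex.norm_real, Real.norm_of_nonneg (Real.sqrt_nonneg t)]

lemma deriv_dilate (x : ℝ) :
    deriv (dilate t v) x = (Real.sqrt t * t : ℝ) * deriv v (t * x) := by
  unfold dilate
  rw [deriv_const_mul_field, deriv_comp_mul_left, Complex.real_smul]
  push_cast
  ring

lemma integral_Ioi_comp_mul_left (g : ℝ → ℝ) (ht : 0 < t) :
    ∫ x in Ioi 0, g (t * x) = t⁻¹ * ∫ x in Ioi 0, g x := by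
  simpa using integral_comp_mul_left_Ioi g 0 ht

lemma integral_norm_sq_dilate (ht : 0 < t) :
    ∫ x in Ioi 0, ‖dilate t v x‖ ^ 2 = ∫ x in Ioi 0, ‖v x‖ ^ 2 := by
  simp_rw [norm_dilate, mul_pow, Real.sq_sqrt ht.le]
  rw [integral_const_mul, integral_Ioi_comp_mul_left (fun x => ‖v x‖ ^ 2) ht,
    mul_inv_cancel_left₀ ht.ne']

lemma integral_norm_rpow_dilate (ht : 0 < t) (s : ℝ) :
    ∫ x in Ioi 0, ‖dilate t v x‖ ^ s = t ^ (s / 2 - 1) * ∫ x in Ioi 0, ‖v x‖ ^ s := by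
  have hsqrt : Real.sqrt t ^ s = t ^ (s / 2) := by
    rw [Real.sqrt_eq_rpow, ← Real.rpow_mul ht.le]; ring_nf
  simp_rw [norm_dilate, Real.mul_rpow (Real.sqrt_nonneg t) (norm_nonneg _), hsqrt]
  rw [integral_const_mul, integral_Ioi_comp_mul_left (fun x => ‖v x‖ ^ s) ht, ← mul_assoc,
    Real.rpow_sub ht, Real.rpow_one, div_eq_mul_inv]
  ring

lemma integral_norm_deriv_sq_dilate (ht : 0 < t) :
    ∫ x in Ioi 0, ‖deriv (dilate t v) x‖ ^ 2 = t ^ 2 * ∫ x in Ioi 0, ‖deriv v x‖ ^ 2 := by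
  have hpt : ∀ x, ‖deriv (dilate t v) x‖ ^ 2 = t ^ 3 * ‖deriv v (t * x)‖ ^ 2 := by
    intro x
    rw [deriv_dilate, norm_mul, Complex.norm_real, mul_pow, Real.norm_eq_abs, sq_abs, mul_pow,
      Real.sq_sqrt ht.le]
    ring
  simp_rw [hpt]
  rw [integral_const_mul, integral_Ioi_comp_mul_left (fun x => ‖deriv v x‖ ^ 2) ht]
  field_simp

lemma norm_dilate_zero_sq (ht : 0 ≤ t) : ‖dilate t v 0‖ ^ 2 = t * ‖v 0‖ ^ 2 := by
  rw [norm_dilate, mul_zero, mul_pow, Real.sq_sqrt ht]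

lemma memA_dilate {p : ℝ} (ht : 0 < t) (hv : MemA p v) : MemA p (dilate t v) := by
  obtain ⟨hv_diff, hv_sq, hv_deriv, hv_pow⟩ := hv
  have hcomp (f : ℝ → ℝ) (hf : IntegrableOn f (Ioi 0)) :
      IntegrableOn (fun x => f (t * x)) (Ioi 0) :=
    (integrableOn_Ioi_comp_mul_left_iff f 0 ht).mpr (by rwa [mul_zero])
  refine ⟨contDiffOn_const.mul (hv_diff.comp (by fun_prop) fun x hx => ?_), ?_, ?_, ?_⟩
  · exact mul_nonneg ht.le hx
  · simp_rw [norm_dilate, mul_pow]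
    exact (hcomp _ hv_sq).const_mul _
  · simp_rw [deriv_dilate, norm_mul, mul_pow]
    exact (hcomp _ hv_deriv).const_mul _
  · simp_rw [norm_dilate, Real.mul_rpow (Real.sqrt_nonneg t) (norm_nonneg _)]
    exact (hcomp _ hv_pow).const_mul _

lemma exists_dilate_ne_zero (ht : 0 < t) (hv : ∃ x ≥ (0 : ℝ), v x ≠ 0) :
    ∃ x ≥ (0 : ℝ), dilate t v x ≠ 0 := by
  obtain ⟨x, hx, hvx⟩ := hv
  refine ⟨x / t, div_nonneg hx ht.le, ?_⟩
  rw [dilate, mul_div_cancel₀ x ht.ne']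
  exact mul_ne_zero (Complex.ofReal_ne_zero.mpr (Real.sqrt_pos.mpr ht).ne') hvx

variable {p α ω : ℝ} {N : ℕ}

lemma Ifun_dilate (ht : 0 < t) :
    Ifun p α ω N (dilate t v) = N * (t ^ 2 * ∫ x in Ioi 0, ‖deriv v x‖ ^ 2)
      + N * (ω * ∫ x in Ioi 0, ‖v x‖ ^ 2) + t * (α * ‖v 0‖ ^ 2)
      - t ^ ((p - 1) / 2) * (N * ∫ x in Ioi 0, ‖v x‖ ^ (p + 1)) := by
  rw [Ifun, integral_norm_deriv_sq_dilate ht, integral_norm_sq_dilate ht,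
    integral_norm_rpow_dilate ht, norm_dilate_zero_sq ht.le]
  ring_nf

lemma Sfun_dilate (ht : 0 < t) :
    Sfun p α ω N (dilate t v) = N * ((1 / 2) * (t ^ 2 * ∫ x in Ioi 0, ‖deriv v x‖ ^ 2)
      + (ω / 2) * (∫ x in Ioi 0, ‖v x‖ ^ 2)
      - (1 / (p + 1)) * (t ^ ((p - 1) / 2) * ∫ x in Ioi 0, ‖v x‖ ^ (p + 1)))
      + (α / 2) * (t * ‖v 0‖ ^ 2) := by
  rw [Sfun, integral_norm_deriv_sq_dilate ht, integral_norm_sq_dilate ht,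
    integral_norm_rpow_dilate ht, norm_dilate_zero_sq ht.le]
  ring_nf

end Dilation

section Functionals

variable {p α ω : ℝ} {N : ℕ} {v : ℝ → ℂ}

lemma MemA.continuousWithinAt_Ioi (hv : MemA p v) {x : ℝ} (hx : 0 ≤ x) :
    ContinuousWithinAt v (Ioi x) x :=
  (hv.1.continuousOn x hx).mono fun _ hy => hx.trans (le_of_lt hy)

lemma MemA.integral_norm_sq_pos (hv : MemA p v) {x : ℝ} (hx : 0 ≤ x) (hvx : v x ≠ 0) :
    0 < ∫ x in Ioi 0, ‖v x‖ ^ 2 :=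
  setIntegral_Ioi_pos_of_continuousWithinAt (fun _ _ => by positivity) hv.2.1 hx
    ((hv.continuousWithinAt_Ioi hx).norm.pow 2) (by positivity)

lemma MemA.integral_norm_rpow_pos (hv : MemA p v) {x : ℝ} (hx : 0 ≤ x) (hvx : v x ≠ 0) :
    0 < ∫ x in Ioi 0, ‖v x‖ ^ (p + 1) :=
  setIntegral_Ioi_pos_of_continuousWithinAt (fun _ _ => by positivity) hv.2.2.2 hx
    ((hv.continuousWithinAt_Ioi hx).norm.rpow_const (Or.inl (norm_ne_zero_iff.mpr hvx)))
    (Real.rpow_pos_of_pos (norm_pos_iff.mpr hvx) _)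

lemma exists_dilate_Ifun_eq_zero (hp : 5 ≤ p) (hα : 0 ≤ α) (hω : 0 < ω) (hN : 0 < N)
    (hv : MemA p v) {x : ℝ} (hx : 0 ≤ x) (hvx : v x ≠ 0) (hP : Pfun p α N v ≤ 0) :
    ∃ t > 0, Ifun p α ω N (dilate t v) = 0 := by
  have hN0 : (0 : ℝ) < N := Nat.cast_pos.mpr hN
  have hR := hv.integral_norm_rpow_pos hx hvx
  have hA : 0 ≤ ∫ x in Ioi 0, ‖deriv v x‖ ^ 2 :=
    setIntegral_nonneg measurableSet_Ioi fun x _ => by positivity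
  have hAR : N * ∫ x in Ioi 0, ‖deriv v x‖ ^ 2 < N * ∫ x in Ioi 0, ‖v x‖ ^ (p + 1) := by
    have hcoef : (p - 1) / (2 * (p + 1)) < 1 := by rw [div_lt_one (by linarith)]; linarith
    rw [Pfun] at hP
    nlinarith [mul_lt_mul_of_pos_right hcoef (mul_pos hN0 hR), mul_nonneg hα (sq_nonneg ‖v 0‖)]
  obtain ⟨t, ht, hroot⟩ := exists_pos_sq_mul_add_add_mul_eq_rpow_mul
    (b := N * (ω * ∫ x in Ioi 0, ‖v x‖ ^ 2)) (c := α * ‖v 0‖ ^ 2) (by positivity)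
    (mul_pos hN0 (mul_pos hω (hv.integral_norm_sq_pos hx hvx))) (by positivity) hAR
    (by linarith : 2 ≤ (p - 1) / 2)
  exact ⟨t, ht, by rw [Ifun_dilate ht]; linear_combination hroot⟩

def nehariActions (p α ω : ℝ) (N : ℕ) : Set ℝ :=
  {s : ℝ | ∃ v : ℝ → ℂ, MemA p v ∧ (∃ x ≥ (0 : ℝ), v x ≠ 0) ∧
    Ifun p α ω N v = 0 ∧ s = Sfun p α ω N v}

lemma Sfun_nonneg_of_Ifun_eq_zero (hp : 1 ≤ p) (hI : Ifun p α ω N v = 0) :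
    0 ≤ Sfun p α ω N v := by
  have hR : 0 ≤ ∫ x in Ioi 0, ‖v x‖ ^ (p + 1) :=
    setIntegral_nonneg measurableSet_Ioi fun x _ => by positivity
  have hcoef : 0 ≤ 1 / 2 - 1 / (p + 1) := by
    rw [sub_nonneg, div_le_div_iff₀ (by linarith) two_pos]; linarith
  have hS : Sfun p α ω N v = Ifun p α ω N v / 2
      + (1 / 2 - 1 / (p + 1)) * (N * ∫ x in Ioi 0, ‖v x‖ ^ (p + 1)) := by
    rw [Sfun, Ifun]; ring
  rw [hS, hI, zero_div, zero_add]
  positivity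

lemma bddBelow_nehariActions (hp : 1 ≤ p) : BddBelow (nehariActions p α ω N) :=
  ⟨0, by rintro _ ⟨u, -, -, hIu, rfl⟩; exact Sfun_nonneg_of_Ifun_eq_zero hp hIu⟩

lemma Sfun_dilate_le (hp : 5 ≤ p) (hα : 0 ≤ α) {t : ℝ} (ht : 0 < t) :
    Sfun p α ω N (dilate t v) ≤ Sfun p α ω N v - (1 - t ^ 2) / 2 * Pfun p α N v := by
  have hR : 0 ≤ ∫ x in Ioi 0, ‖v x‖ ^ (p + 1) :=
    setIntegral_nonneg measurableSet_Ioi fun x _ => by positivity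
  have hBernoulli := one_add_mul_sq_sub_one_le_rpow ht.le (by linarith : 2 ≤ (p - 1) / 2)
  have hdefect : Sfun p α ω N v - (1 - t ^ 2) / 2 * Pfun p α N v - Sfun p α ω N (dilate t v)
      = α / 4 * ‖v 0‖ ^ 2 * (1 - t) ^ 2 + N / (p + 1) * (∫ x in Ioi 0, ‖v x‖ ^ (p + 1))
        * (t ^ ((p - 1) / 2) - (1 + (p - 1) / 2 / 2 * (t ^ 2 - 1))) := by
    rw [Sfun_dilate ht, Sfun, Pfun]
    field_simp
    ring
  rw [← sub_nonneg, hdefect]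
  have := sub_nonneg.mpr hBernoulli
  have : 0 < p + 1 := by linarith
  positivity

end Functionals

/-- If `v` in the admissible class is not identically zero and `P(v) ≤ 0`, then the
ground-state action level `d` satisfies `d ≤ S_ω(v) − (1/2)P(v)`. -/
theorem ground_state_level_bound (p α ω : ℝ) (hp : 5 ≤ p) (hα : 0 < α) (hω : 0 < ω)
    (N : ℕ) (hN : 2 ≤ N)
    (d : ℝ)
    (hd : d = sInf {s : ℝ | ∃ v : ℝ → ℂ, MemA p v ∧ (∃ x ≥ (0 : ℝ), v x ≠ 0) ∧
      Ifun p α ω N v = 0 ∧ s = Sfun p α ω N v}) :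
    ∀ v : ℝ → ℂ, MemA p v → (∃ x ≥ (0 : ℝ), v x ≠ 0) → Pfun p α N v ≤ 0 →
      d ≤ Sfun p α ω N v - (1 / 2) * Pfun p α N v := by
  rintro v hv ⟨x₀, hx₀, hvx₀⟩ hP
  obtain ⟨t, ht, hI⟩ := exists_dilate_Ifun_eq_zero hp hα.le hω (by omega) hv hx₀ hvx₀ hP
  have hmem : Sfun p α ω N (dilate t v) ∈ nehariActions p α ω N :=
    ⟨dilate t v, memA_dilate ht hv, exists_dilate_ne_zero ht ⟨x₀, hx₀, hvx₀⟩, hI, rfl⟩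
  rw [hd]
  calc sInf (nehariActions p α ω N)
      ≤ Sfun p α ω N (dilate t v) := csInf_le (bddBelow_nehariActions (by linarith)) hmem
    _ ≤ Sfun p α ω N v - (1 - t ^ 2) / 2 * Pfun p α N v := Sfun_dilate_le hp hα.le ht
    _ ≤ Sfun p α ω N v - 1 / 2 * Pfun p α N v := by nlinarith [sq_nonneg t]
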